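/- Consider the generalized trimmed lasso with least-squares loss: minimize F(x₀, …, x_L) := (1/2)‖b − Σ_{l=0}^{L} A_l x_l‖₂² + Σ_{l=1}^{L} γ_l T_{K_l, m_l, p_l}(D_l x_l − c_l), where b ∈ ℝ^q, A_l ∈ ℝ^{q×n_l}, and for each l ∈ [L] there exists x̄_l with D_l x̄_l = c_l. Then any d-stationary point (x₀*, x₁*, …, x_L*) satisfies T_{K_l, m_l, p_l}(D_l x_l* − c_l) = 0 for all l ∈ [L], provided γ_l > ‖A_l‖₂ · ‖b − Σ_{l∈[L]} A_l x̄_l‖₂ / σ_{K_l, m_l, p_l}(D_l) holds for all l ∈ [L], where ‖A_l‖₂ is the spectral norm (largest singular value) of A_l. -/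

import Mathlib

open Filter Topology Matrix

/-- `f` has one-sided directional derivative `L` at `x` in direction `d`. -/
def HasDDerivAt {E : Type*} [AddCommMonoid E] [SMul ℝ E] (f : E → ℝ) (x d : E) (L : ℝ) :
    Prop :=
  Tendsto (fun ς : ℝ => (f (x + ς • d) - f x) / ς) (nhdsWithin 0 (Set.Ioi 0)) (nhds L)

/-- The trimmed (group) ℓ₁ norm `T_{K,m,p}`. -/
noncomputable def trimmedL1 {m p : ℕ} (K : ℕ) (z : Fin m × Fin p → ℝ) : ℝ :=
  sInf {s : ℝ | ∃ Λ : Finset (Fin m), Λ.card = m - K ∧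
    s = ∑ i ∈ Λ, Real.sqrt (∑ j, z (i, j) ^ 2)}

/-- The smallest nonzero singular value of a real matrix. -/
noncomputable def sigmaMin {α β : Type*} [Fintype α] [Fintype β] (A : Matrix α β ℝ) : ℝ :=
  sInf {σ : ℝ | 0 < σ ∧ ∃ v : β → ℝ, v ≠ 0 ∧ (Aᵀ * A).mulVec v = (σ ^ 2) • v}

/-- The spectral norm (largest singular value) of a real matrix. -/
noncomputable def specNorm {α β : Type*} [Fintype α] [Fintype β] (A : Matrix α β ℝ) : ℝ :=
  sSup {σ : ℝ | 0 ≤ σ ∧ ∃ v : β → ℝ, v ≠ 0 ∧ (Aᵀ * A).mulVec v = (σ ^ 2) • v}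

/-- The row-block submatrix `(D)_Λ`. -/
def blockSub {m p n : ℕ} (D : Matrix (Fin m × Fin p) (Fin n) ℝ) (Λ : Finset (Fin m)) :
    Matrix ({i // i ∈ Λ} × Fin p) (Fin n) ℝ :=
  D.submatrix (fun q => ((q.1 : Fin m), q.2)) id

open scoped Classical in
/-- The constant `σ_{K,m,p}(D)`. -/
noncomputable def sigmaK {m p n : ℕ} (K : ℕ) (D : Matrix (Fin m × Fin p) (Fin n) ℝ) : ℝ :=
  if Function.Surjective D.mulVec then sigmaMin D
  else sInf {s : ℝ | ∃ Λ : Finset (Fin m), Λ.card = m - K ∧ blockSub D Λ ≠ 0 ∧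
    s = sigmaMin (blockSub D Λ)}

/-- ℓ₂ norm of a vector. -/
noncomputable def l2 {k : ℕ} (v : Fin k → ℝ) : ℝ := Real.sqrt (∑ j, v j ^ 2)


open RealInnerProductSpace in
lemma _dummy : True := trivial
open RealInnerProductSpace
open Filter Topology Matrix
set_option linter.unusedSectionVars false
set_option maxHeartbeats 2000000

noncomputable def nrm {ι : Type*} [Fintype ι] (v : ι → ℝ) : ℝ := Real.sqrt (∑ j, v j ^ 2)

lemma nrm_nonneg {ι : Type*} [Fintype ι] (v : ι → ℝ) : 0 ≤ nrm v := Real.sqrt_nonneg _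

lemma sq_nrm {ι : Type*} [Fintype ι] (v : ι → ℝ) : nrm v ^ 2 = ∑ j, v j ^ 2 := by
  rw [nrm, Real.sq_sqrt]; positivity

section spectral
variable {α β : Type*} [Fintype α] [Fintype β] [DecidableEq β] (M : Matrix α β ℝ)

lemma hHm : (Mᵀ * M).IsHermitian := by simpa using isHermitian_conjTranspose_mul_self M

noncomputable def lam : β → ℝ := (hHm M).eigenvalues
noncomputable def evb : OrthonormalBasis β ℝ (EuclideanSpace ℝ β) := (hHm M).eigenvectorBasis

lemma Ht : (Mᵀ * M)ᵀ = Mᵀ * M := by rw [Matrix.transpose_mul, Matrix.transpose_transpose]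

lemma dot_H (v : β → ℝ) : v ⬝ᵥ (Mᵀ * M).mulVec v = ∑ i, (M.mulVec v i) ^ 2 := by
  rw [← Matrix.mulVec_mulVec, Matrix.dotProduct_mulVec, Matrix.vecMul_transpose]
  simp [dotProduct, sq]

lemma inner_eq_dot (x y : EuclideanSpace ℝ β) : ⟪x, y⟫ = ∑ j, x j * y j := by
  simp [PiLp.inner_apply]
  exact Finset.sum_congr rfl fun _ _ => mul_comm _ _

lemma repr_apply (x : EuclideanSpace ℝ β) (j : β) :
    (evb M).repr x j = ∑ i, (evb M) j i * x i := by
  rw [OrthonormalBasis.repr_apply_apply, inner_eq_dot]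

lemma evb_mulVec (j : β) :
    (Mᵀ * M).mulVec ((evb M) j) = lam M j • ((evb M) j : β → ℝ) :=
  (hHm M).mulVec_eigenvectorBasis j

lemma repr_mulVec (x : β → ℝ) (j : β) :
    (evb M).repr (WithLp.toLp 2 ((Mᵀ * M).mulVec x)) j = lam M j * (evb M).repr (WithLp.toLp 2 x) j := by
  rw [repr_apply, repr_apply]
  have h1 : ∀ y : β → ℝ, ∑ i, (evb M) j i * (WithLp.toLp 2 y) i = ((evb M) j : β → ℝ) ⬝ᵥ y := by
    intro y; simp [dotProduct]
  rw [h1, h1, Matrix.dotProduct_mulVec, ← Matrix.mulVec_transpose, Ht, evb_mulVec,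
    smul_dotProduct, smul_eq_mul]

lemma parseval (x : β → ℝ) : ∑ j, ((evb M).repr (WithLp.toLp 2 x) j) ^ 2 = ∑ i, (x i) ^ 2 := by
  have h := (evb M).repr.inner_map_map (WithLp.toLp 2 x) (WithLp.toLp 2 x)
  rw [inner_eq_dot, inner_eq_dot] at h
  simpa [sq] using h

lemma quad_form (v : β → ℝ) :
    ∑ i, (M.mulVec v i) ^ 2 = ∑ j, lam M j * ((evb M).repr (WithLp.toLp 2 v) j) ^ 2 := by
  rw [← dot_H]
  have h := (evb M).repr.inner_map_map (WithLp.toLp 2 v)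
      (WithLp.toLp 2 ((Mᵀ * M).mulVec v))
  rw [inner_eq_dot, inner_eq_dot] at h
  simp only [WithLp.ofLp_toLp] at h
  have : v ⬝ᵥ (Mᵀ * M).mulVec v = ∑ j, v j * (Mᵀ * M).mulVec v j := by simp [dotProduct]
  rw [this, ← h]
  refine Finset.sum_congr rfl fun j _ => ?_
  rw [repr_mulVec]; ring

lemma repr_evb (j k : β) : (evb M).repr ((evb M) j) k = if k = j then 1 else 0 := by
  rw [OrthonormalBasis.repr_self, EuclideanSpace.single_apply]

lemma lam_eq (j : β) : lam M j = ∑ i, (M.mulVec ((evb M) j) i) ^ 2 := by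
  have h := quad_form M ((evb M) j)
  rw [h]
  simp [repr_evb, ite_pow, mul_ite, WithLp.toLp_ofLp]

lemma lam_nonneg (j : β) : 0 ≤ lam M j := by
  rw [lam_eq]; positivity

lemma evb_ne_zero (j : β) : ((evb M) j : β → ℝ) ≠ 0 := by
  have h := (evb M).orthonormal.ne_zero j
  intro hc
  apply h
  ext i
  exact congrFun hc i

lemma eig_mem {σ : ℝ} {v : β → ℝ} (hv : v ≠ 0)
    (h : (Mᵀ * M).mulVec v = (σ ^ 2) • v) : ∃ j, lam M j = σ ^ 2 := by
  have hr : ∃ j, (evb M).repr (WithLp.toLp 2 v) j ≠ 0 := by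
    by_contra hc
    push_neg at hc
    apply hv
    have : (evb M).repr (WithLp.toLp 2 v) = 0 := by ext j; exact hc j
    have h0 : (WithLp.toLp 2 v : EuclideanSpace ℝ β) = 0 := by
      have := (evb M).repr.map_eq_zero_iff.mp this
      exact this
    ext i; exact congrArg (fun x : EuclideanSpace ℝ β => x i) h0
  obtain ⟨j, hj⟩ := hr
  refine ⟨j, ?_⟩
  have h2 : (evb M).repr (WithLp.toLp 2 ((Mᵀ * M).mulVec v)) j = (evb M).repr (WithLp.toLp 2 ((σ ^ 2) • v)) j := by rw [h]
  rw [repr_mulVec] at h2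
  have h3 : (evb M).repr (WithLp.toLp 2 ((σ ^ 2) • v)) j = σ ^ 2 * (evb M).repr (WithLp.toLp 2 v) j := by
    rw [WithLp.toLp_smul, _root_.map_smul]; simp
  rw [h3] at h2
  exact mul_right_cancel₀ hj h2
end spectral

section spectral2
variable {α β : Type*} [Fintype α] [Fintype β] [DecidableEq β] (M : Matrix α β ℝ)

lemma quad_nrm (v : β → ℝ) : nrm (M.mulVec v) ^ 2 = ∑ j, lam M j * ((evb M).repr (WithLp.toLp 2 v) j) ^ 2 := by
  rw [sq_nrm, quad_form]

lemma M_ne_zero_exists (hM : M ≠ 0) : ∃ j, lam M j ≠ 0 := by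
  by_contra hc
  push_neg at hc
  apply hM
  ext i j0
  have h : M.mulVec (Pi.single j0 1) i = 0 := by
    have h2 : nrm (M.mulVec (Pi.single j0 1)) ^ 2 = 0 := by
      rw [quad_nrm]; simp [hc]
    rw [sq_nrm] at h2
    have h3 : ∀ i' ∈ Finset.univ, (0:ℝ) ≤ (M.mulVec (Pi.single j0 1) i') ^ 2 :=
      fun i' _ => sq_nonneg _
    have := (Finset.sum_eq_zero_iff_of_nonneg h3).mp h2 i (Finset.mem_univ i)
    exact pow_eq_zero_iff (by norm_num) |>.mp this
  simpa [Matrix.mulVec_single] using h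

lemma sigmaMin_spec (hM : M ≠ 0) : 0 < sigmaMin M ∧
    ∀ w : β → ℝ, ∃ u : β → ℝ, M.mulVec u = M.mulVec w ∧
      sigmaMin M * nrm u ≤ nrm (M.mulVec w) := by
  classical
  set s : Finset β := Finset.univ.filter (fun j => lam M j ≠ 0) with hs_def
  have hs : s.Nonempty := by
    obtain ⟨j, hj⟩ := M_ne_zero_exists M hM
    exact ⟨j, by simp [hs_def, hj]⟩
  obtain ⟨j0, hj0s, hmin⟩ := s.exists_min_image (lam M) hs
  have hj0ne : lam M j0 ≠ 0 := by simpa [hs_def] using hj0s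
  have hlp : 0 < lam M j0 := lt_of_le_of_ne (lam_nonneg M j0) (Ne.symm hj0ne)
  -- sigmaMin M = sqrt (lam M j0)
  have hmem : Real.sqrt (lam M j0) ∈
      {σ : ℝ | 0 < σ ∧ ∃ v : β → ℝ, v ≠ 0 ∧ (Mᵀ * M).mulVec v = (σ ^ 2) • v} := by
    refine ⟨Real.sqrt_pos.2 hlp, (evb M) j0, evb_ne_zero M j0, ?_⟩
    rw [Real.sq_sqrt hlp.le, evb_mulVec]
  have hlb : ∀ x ∈ {σ : ℝ | 0 < σ ∧ ∃ v : β → ℝ, v ≠ 0 ∧ (Mᵀ * M).mulVec v = (σ ^ 2) • v},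
      Real.sqrt (lam M j0) ≤ x := by
    rintro σ ⟨hσ, v, hv, heig⟩
    obtain ⟨j, hj⟩ := eig_mem M hv heig
    have hjs : j ∈ s := by simp [hs_def]; rw [hj]; positivity
    have := hmin j hjs
    rw [hj] at this
    calc Real.sqrt (lam M j0) ≤ Real.sqrt (σ ^ 2) := Real.sqrt_le_sqrt this
    _ = σ := by rw [Real.sqrt_sq hσ.le]
  have hsig : sigmaMin M = Real.sqrt (lam M j0) :=
    le_antisymm (csInf_le ⟨_, hlb⟩ hmem) (le_csInf ⟨_, hmem⟩ hlb)
  refine ⟨hsig ▸ Real.sqrt_pos.2 hlp, fun w => ?_⟩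
  set u : β → ℝ := ((evb M).repr.symm
    (WithLp.toLp 2 (fun j => if lam M j = 0 then 0 else (evb M).repr (WithLp.toLp 2 w) j)) : β → ℝ) with hu_def
  have hru : ∀ j, (evb M).repr (WithLp.toLp 2 u) j = if lam M j = 0 then 0 else (evb M).repr (WithLp.toLp 2 w) j := by
    intro j
    rw [hu_def, WithLp.toLp_ofLp, LinearIsometryEquiv.apply_symm_apply]
  have huw : M.mulVec u = M.mulVec w := by
    have hz : nrm (M.mulVec (u - w)) ^ 2 = 0 := by
      rw [quad_nrm]
      refine Finset.sum_eq_zero fun j _ => ?_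
      have : (evb M).repr (WithLp.toLp 2 (u - w : β → ℝ)) j
          = (evb M).repr (WithLp.toLp 2 u) j - (evb M).repr (WithLp.toLp 2 w) j := by
        have : (WithLp.toLp 2 (u - w : β → ℝ)) = WithLp.toLp 2 u - WithLp.toLp 2 w := rfl
        rw [this, map_sub]; rfl
      rw [this, hru]
      by_cases h : lam M j = 0 <;> simp [h]
    rw [sq_nrm] at hz
    have h3 : ∀ i' ∈ Finset.univ, (0:ℝ) ≤ (M.mulVec (u - w) i') ^ 2 := fun i' _ => sq_nonneg _
    have h4 : ∀ i, M.mulVec (u - w) i = 0 := fun i =>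
      pow_eq_zero_iff (two_ne_zero) |>.mp ((Finset.sum_eq_zero_iff_of_nonneg h3).mp hz i
        (Finset.mem_univ i))
    have h5 : M.mulVec (u - w) = M.mulVec u - M.mulVec w := Matrix.mulVec_sub M u w
    have h6 : M.mulVec u - M.mulVec w = 0 := by
      ext i; exact (h5 ▸ h4 i : _)
    exact sub_eq_zero.mp h6
  refine ⟨u, huw, ?_⟩
  have hb : (sigmaMin M * nrm u) ^ 2 ≤ nrm (M.mulVec w) ^ 2 := by
    rw [← huw, mul_pow, quad_nrm, hsig, Real.sq_sqrt hlp.le, sq_nrm, ← parseval M u,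
      Finset.mul_sum]
    refine Finset.sum_le_sum fun j _ => ?_
    by_cases h : lam M j = 0
    · simp [hru j, h]
    · have hjs : j ∈ s := by simp [hs_def, h]
      have := hmin j hjs
      nlinarith [sq_nonneg ((evb M).repr (WithLp.toLp 2 u) j)]
  have h1 : 0 ≤ sigmaMin M * nrm u := by
    apply mul_nonneg _ (nrm_nonneg u)
    rw [hsig]; exact Real.sqrt_nonneg _
  nlinarith [nrm_nonneg (M.mulVec w)]

lemma specNorm_spec (v : β → ℝ) : nrm (M.mulVec v) ≤ specNorm M * nrm v := by
  classical
  by_cases hβ : Nonempty β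
  · obtain ⟨j1, _, hmax⟩ := Finset.univ.exists_max_image (lam M) Finset.univ_nonempty
    have hlmax : 0 ≤ lam M j1 := lam_nonneg M j1
    have hmem : Real.sqrt (lam M j1) ∈
        {σ : ℝ | 0 ≤ σ ∧ ∃ v : β → ℝ, v ≠ 0 ∧ (Mᵀ * M).mulVec v = (σ ^ 2) • v} := by
      refine ⟨Real.sqrt_nonneg _, (evb M) j1, evb_ne_zero M j1, ?_⟩
      rw [Real.sq_sqrt hlmax, evb_mulVec]
    have hub : ∀ x ∈ {σ : ℝ | 0 ≤ σ ∧ ∃ v : β → ℝ, v ≠ 0 ∧ (Mᵀ * M).mulVec v = (σ ^ 2) • v},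
        x ≤ Real.sqrt (lam M j1) := by
      rintro σ ⟨hσ, w, hw, heig⟩
      obtain ⟨j, hj⟩ := eig_mem M hw heig
      calc σ = Real.sqrt (σ ^ 2) := (Real.sqrt_sq hσ).symm
      _ ≤ Real.sqrt (lam M j1) := Real.sqrt_le_sqrt (hj ▸ hmax j (Finset.mem_univ j))
    have hspec : specNorm M = Real.sqrt (lam M j1) :=
      le_antisymm (csSup_le ⟨_, hmem⟩ hub) (le_csSup ⟨_, hub⟩ hmem)
    have hb : nrm (M.mulVec v) ^ 2 ≤ (specNorm M * nrm v) ^ 2 := by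
      rw [quad_nrm, hspec, mul_pow, Real.sq_sqrt hlmax, sq_nrm, ← parseval M v,
        Finset.mul_sum]
      refine Finset.sum_le_sum fun j _ => ?_
      have := hmax j (Finset.mem_univ j)
      nlinarith [sq_nonneg ((evb M).repr (WithLp.toLp 2 v) j), lam_nonneg M j]
    have h1 : 0 ≤ specNorm M * nrm v := by
      rw [hspec]; exact mul_nonneg (Real.sqrt_nonneg _) (nrm_nonneg v)
    nlinarith [nrm_nonneg (M.mulVec v)]
  · haveI := not_nonempty_iff.mp hβ
    have h0 : M.mulVec v = 0 := by
      ext i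
      simp [Matrix.mulVec, dotProduct, Finset.univ_eq_empty]
    have h1 : nrm v = 0 := by
      rw [nrm]
      simp [Finset.univ_eq_empty]
    rw [h0, h1, mul_zero, nrm]
    simp
end spectral2

-- tendsto of inf' over a finset
lemma tendsto_finset_inf' {ι : Type*} {F : Filter ℝ} (s : Finset ι) (hs : s.Nonempty)
    (q : ι → ℝ → ℝ) (Li : ι → ℝ) (h : ∀ i ∈ s, Tendsto (q i) F (𝓝 (Li i))) :
    Tendsto (fun t => s.inf' hs (fun i => q i t)) F (𝓝 (s.inf' hs Li)) :=
  Filter.Tendsto.finset_inf'_nhds_apply hs h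

-- right-derivative of t ↦ nrm (z + t v)
lemma blockQuot {ι : Type*} [Fintype ι] (z v : ι → ℝ) :
    ∃ Lb, Tendsto (fun t => (nrm (fun j => z j + t * v j) - nrm z) / t)
      (𝓝[>] (0:ℝ)) (𝓝 Lb) := by
  classical
  set a := ∑ j, z j ^ 2 with ha_def
  set bq := ∑ j, z j * v j with hbq_def
  set cq := ∑ j, v j ^ 2 with hcq_def
  have hq : ∀ t : ℝ, ∑ j, (z j + t * v j) ^ 2 = a + (2 * bq) * t + cq * t ^ 2 := by
    intro t
    have h1 : ∀ j, (z j + t * v j) ^ 2 = z j ^ 2 + t * (2 * (z j * v j)) + t ^ 2 * v j ^ 2 := by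
      intro j; ring
    rw [Finset.sum_congr rfl (fun j _ => h1 j), Finset.sum_add_distrib, Finset.sum_add_distrib,
      ← Finset.mul_sum, ← Finset.mul_sum, ← Finset.mul_sum]
    ring
  by_cases ha : a = 0
  · -- z = 0 essentially
    have hz : nrm z = 0 := by rw [nrm, ← ha_def, ha, Real.sqrt_zero]
    refine ⟨Real.sqrt cq, Tendsto.congr' ?_ tendsto_const_nhds⟩
    have hev : ∀ᶠ t in 𝓝[>] (0:ℝ),
        (nrm (fun j => z j + t * v j) - nrm z) / t = Real.sqrt cq := by
      filter_upwards [self_mem_nhdsWithin] with t ht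
      have ht0 : (0:ℝ) < t := ht
      rw [hz, sub_zero, nrm, hq, ha]
      have : (0:ℝ) + 2 * bq * t + cq * t ^ 2 = t ^ 2 * cq := by
        have hb : bq = 0 := by
          have hz0 : ∀ j, z j = 0 := by
            intro j
            have h3 : ∀ j' ∈ Finset.univ, (0:ℝ) ≤ (z j') ^ 2 := fun _ _ => sq_nonneg _
            have h4 := (Finset.sum_eq_zero_iff_of_nonneg h3).mp (ha_def ▸ ha) j (Finset.mem_univ j)
            exact pow_eq_zero_iff two_ne_zero |>.mp h4
          simp [hbq_def, hz0]
        rw [hb]; ring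
      rw [this, Real.sqrt_mul (sq_nonneg t), Real.sqrt_sq ht0.le]
      field_simp
    exact Filter.EventuallyEq.symm hev
  · have hapos : 0 < a := lt_of_le_of_ne (by positivity) (Ne.symm ha)
    set g : ℝ → ℝ := fun t => Real.sqrt (a + (2 * bq) * t + cq * t ^ 2) with hg_def
    have hp : HasDerivAt (fun t : ℝ => a + (2 * bq) * t + cq * t ^ 2)
        (2 * bq + cq * (2 * 0)) 0 := by
      have h1 : HasDerivAt (fun t : ℝ => a) 0 0 := hasDerivAt_const 0 a
      have h2 : HasDerivAt (fun t : ℝ => (2 * bq) * t) (2 * bq) 0 := by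
        simpa using (hasDerivAt_id (0:ℝ)).const_mul (2 * bq)
      have h3 : HasDerivAt (fun t : ℝ => cq * t ^ 2) (cq * (2 * 0)) 0 := by
        have := (hasDerivAt_pow 2 (0:ℝ)).const_mul cq
        simpa using this
      exact ((h1.add h2).add h3).congr_deriv (by ring)
    have hp0 : a + (2 * bq) * 0 + cq * 0 ^ 2 ≠ 0 := by simpa using ha
    have hg : HasDerivAt g ((2 * bq + cq * (2 * 0)) / (2 * Real.sqrt (a + (2 * bq) * 0 + cq * 0 ^ 2))) 0 :=
      hp.sqrt hp0
    have hslope := hasDerivAt_iff_tendsto_slope.mp hg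
    have hmono : 𝓝[>] (0:ℝ) ≤ 𝓝[≠] (0:ℝ) :=
      nhdsWithin_mono 0 (fun t ht => ne_of_gt ht)
    refine ⟨_, Tendsto.congr ?_ (hslope.mono_left hmono)⟩
    intro t
    rw [slope_def_field, sub_zero]
    have e1 : nrm (fun j => z j + t * v j) = g t := by rw [nrm, hg_def]; simp only; rw [hq]
    have e2 : nrm z = g 0 := by
      rw [nrm, hg_def]
      simp only
      rw [show a + 2 * bq * (0:ℝ) + cq * 0 ^ 2 = a by ring, ha_def]
    rw [e1, e2]


-- (x - c)/t commutes with inf'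
lemma inf'_sub_div {ι : Type*} (s : Finset ι) (hs : s.Nonempty) (g : ι → ℝ) (C t : ℝ)
    (ht : 0 < t) : (s.inf' hs g - C) / t = s.inf' hs (fun i => (g i - C) / t) := by
  have hmin : ∀ x y : ℝ, (min x y - C) / t = min ((x - C) / t) ((y - C) / t) := by
    intro x y
    rcases le_total x y with h | h
    · rw [min_eq_left h, min_eq_left ((div_le_div_iff_of_pos_right ht).mpr (by linarith))]
    · rw [min_eq_right h, min_eq_right ((div_le_div_iff_of_pos_right ht).mpr (by linarith))]
  exact Finset.apply_inf'_eq_inf'_comp hs (fun x => (x - C) / t) hmin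

-- nonneg scaling commutes with inf'
lemma inf'_mul_left {ι : Type*} (s : Finset ι) (hs : s.Nonempty) (g : ι → ℝ) {c : ℝ}
    (hc : 0 ≤ c) : c * s.inf' hs g = s.inf' hs (fun i => c * g i) := by
  have hmin : ∀ x y : ℝ, c * min x y = min (c * x) (c * y) := by
    intro x y
    rcases le_total x y with h | h
    · rw [min_eq_left h, min_eq_left (by nlinarith)]
    · rw [min_eq_right h, min_eq_right (by nlinarith)]
  exact Finset.apply_inf'_eq_inf'_comp hs (fun x => c * x) hmin

-- right-derivative of a finite min of right-differentiable functions
lemma exists_right_deriv_inf' {ι : Type*} (s : Finset ι) (hs : s.Nonempty) (f : ι → ℝ → ℝ)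
    (hc : ∀ i ∈ s, Tendsto (f i) (𝓝[>] (0:ℝ)) (𝓝 (f i 0)))
    (hd : ∀ i, ∃ Li, (i ∈ s → Tendsto (fun t => (f i t - f i 0) / t) (𝓝[>] (0:ℝ)) (𝓝 Li))) :
    ∃ Lh, Tendsto (fun t => (s.inf' hs (fun i => f i t) - s.inf' hs (fun i => f i 0)) / t)
      (𝓝[>] (0:ℝ)) (𝓝 Lh) := by
  classical
  choose Li hLi using hd
  set m0 := s.inf' hs (fun i => f i 0) with hm0
  set a := s.filter (fun i => f i 0 = m0) with ha_def
  obtain ⟨i0, hi0s, hi0⟩ := s.exists_mem_eq_inf' hs (fun i => f i 0)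
  have ha : a.Nonempty := ⟨i0, Finset.mem_filter.mpr ⟨hi0s, hi0.symm⟩⟩
  have ha2 := ha
  obtain ⟨j0, hj0a⟩ := ha2
  have hj0s : j0 ∈ s := Finset.mem_of_mem_filter j0 hj0a
  have hj0 : f j0 0 = m0 := (Finset.mem_filter.mp hj0a).2
  -- eventually the inf over s is attained within a
  have hev : ∀ᶠ t in 𝓝[>] (0:ℝ), ∀ i ∈ s, i ∉ a → f j0 t < f i t := by
    rw [Filter.eventually_all_finset]
    intro i his
    by_cases hia : i ∈ a
    · filter_upwards with t h; exact absurd hia h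
    · have hgt : m0 < f i 0 := by
        have hle : m0 ≤ f i 0 := Finset.inf'_le _ his
        rcases lt_or_eq_of_le hle with h | h
        · exact h
        · exact absurd (Finset.mem_filter.mpr ⟨his, h.symm⟩) hia
      have htend : Tendsto (fun t => f i t - f j0 t) (𝓝[>] (0:ℝ)) (𝓝 (f i 0 - m0)) := by
        have := (hc i his).sub (hc j0 hj0s)
        rwa [hj0] at this
      have := htend.eventually (eventually_gt_nhds (by linarith : (0:ℝ) < f i 0 - m0))
      filter_upwards [this] with t h _
      linarith
  have hevEq : ∀ᶠ t in 𝓝[>] (0:ℝ),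
      s.inf' hs (fun i => f i t) = a.inf' ha (fun i => f i t) := by
    filter_upwards [hev] with t h
    apply le_antisymm
    · exact Finset.le_inf' _ _ (fun i hia =>
        Finset.inf'_le _ (Finset.mem_of_mem_filter i hia))
    · obtain ⟨i1, hi1s, hi1⟩ := s.exists_mem_eq_inf' hs (fun i => f i t)
      rw [hi1]
      by_cases hi1a : i1 ∈ a
      · exact Finset.inf'_le _ hi1a
      · calc a.inf' ha (fun i => f i t) ≤ f j0 t := Finset.inf'_le _ hj0a
        _ ≤ f i1 t := (h i1 hi1s hi1a).le
  refine ⟨a.inf' ha Li, ?_⟩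
  have hevQ : ∀ᶠ t in 𝓝[>] (0:ℝ),
      (s.inf' hs (fun i => f i t) - m0) / t
        = a.inf' ha (fun i => (f i t - f i 0) / t) := by
    filter_upwards [hevEq, self_mem_nhdsWithin] with t hEq ht
    rw [hEq, inf'_sub_div a ha _ m0 t ht]
    refine Finset.inf'_congr ha rfl (fun i hia => ?_)
    rw [(Finset.mem_filter.mp hia).2]
  exact Tendsto.congr' (Filter.EventuallyEq.symm hevQ)
    (tendsto_finset_inf' a ha _ Li (fun i hia => hLi i (Finset.mem_of_mem_filter i hia)))

section trimmed
variable {m p : ℕ} (K : ℕ)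

def PP (m K : ℕ) : Finset (Finset (Fin m)) := Finset.univ.powersetCard (m - K)

lemma PP_nonempty : (PP m K).Nonempty := by
  rw [PP, Finset.powersetCard_nonempty]
  simp [Nat.sub_le]

lemma trimmedL1_eq (z : Fin m × Fin p → ℝ) :
    trimmedL1 K z = (PP m K).inf' (PP_nonempty K)
      (fun Λ => ∑ i ∈ Λ, nrm (fun j => z (i, j))) := by
  rw [Finset.inf'_eq_csInf_image, trimmedL1]
  congr 1
  ext x
  constructor
  · rintro ⟨Λ, hcard, rfl⟩
    refine ⟨Λ, by simpa [PP, Finset.mem_powersetCard_univ] using hcard, rfl⟩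
  · rintro ⟨Λ, hΛ, rfl⟩
    exact ⟨Λ, by simpa [PP, Finset.mem_powersetCard_univ] using hΛ, rfl⟩

lemma trimmedL1_nonneg (z : Fin m × Fin p → ℝ) : 0 ≤ trimmedL1 K z := by
  rw [trimmedL1_eq]
  apply Finset.le_inf'
  intro Λ _
  exact Finset.sum_nonneg (fun i _ => nrm_nonneg _)

lemma nrm_const_mul {ι : Type*} [Fintype ι] (v : ι → ℝ) {c : ℝ} (hc : 0 ≤ c) :
    nrm (fun j => c * v j) = c * nrm v := by
  rw [nrm, nrm]
  have : ∀ j, (c * v j) ^ 2 = c ^ 2 * v j ^ 2 := fun j => by ring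
  rw [Finset.sum_congr rfl (fun j _ => this j), ← Finset.mul_sum,
    Real.sqrt_mul (sq_nonneg c), Real.sqrt_sq hc]

lemma trimmedL1_scale (z : Fin m × Fin p → ℝ) {c : ℝ} (hc : 0 ≤ c) :
    trimmedL1 K (fun ip => c * z ip) = c * trimmedL1 K z := by
  rw [trimmedL1_eq, trimmedL1_eq]
  have hmin : ∀ x y : ℝ, c * min x y = min (c * x) (c * y) := by
    intro x y
    rcases le_total x y with h | h
    · rw [min_eq_left h, min_eq_left (by nlinarith)]
    · rw [min_eq_right h, min_eq_right (by nlinarith)]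
  rw [Finset.apply_inf'_eq_inf'_comp (PP_nonempty K) (fun x => c * x) hmin]
  refine Finset.inf'_congr _ rfl (fun Λ _ => ?_)
  simp only [Function.comp]
  rw [Finset.mul_sum]
  exact Finset.sum_congr rfl (fun i _ => nrm_const_mul (fun j => z (i, j)) hc)

-- ℓ2 norm of restriction bounded by the block sum
lemma nrm_restrict_le (z : Fin m × Fin p → ℝ) (Λ : Finset (Fin m)) :
    nrm (fun q : {i // i ∈ Λ} × Fin p => z (q.1, q.2))
      ≤ ∑ i ∈ Λ, nrm (fun j => z (i, j)) := by
  have hL2 : (nrm (fun q : {i // i ∈ Λ} × Fin p => z (q.1, q.2))) ^ 2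
      = ∑ i ∈ Λ, (nrm (fun j => z (i, j))) ^ 2 := by
    rw [sq_nrm]
    rw [Fintype.sum_prod_type]
    rw [← Finset.sum_attach Λ (fun i => nrm (fun j => z (i, j)) ^ 2)]
    exact Finset.sum_congr rfl (fun i _ => by rw [sq_nrm])
  have h2 : ∑ i ∈ Λ, (nrm (fun j => z (i, j))) ^ 2
      ≤ (∑ i ∈ Λ, nrm (fun j => z (i, j))) ^ 2 :=
    Finset.sum_sq_le_sq_sum_of_nonneg (fun i _ => nrm_nonneg _)
  nlinarith [nrm_nonneg (fun q : {i // i ∈ Λ} × Fin p => z (q.1, q.2)),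
    Finset.sum_nonneg (fun i (_ : i ∈ Λ) => nrm_nonneg (fun j => z (i, j)))]
end trimmed


lemma nrm_neg {ι : Type*} [Fintype ι] (v : ι → ℝ) : nrm (fun i => -(v i)) = nrm v := by
  rw [nrm, nrm]
  congr 1
  exact Finset.sum_congr rfl (fun i _ => by ring)

lemma dot_le_nrm {ι : Type*} [Fintype ι] (u v : ι → ℝ) : ∑ i, u i * v i ≤ nrm u * nrm v := by
  have h2 : (∑ i, u i * v i) ^ 2 ≤ (nrm u * nrm v) ^ 2 := by
    rw [mul_pow, sq_nrm, sq_nrm]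
    exact Finset.sum_mul_sq_le_sq_mul_sq Finset.univ u v
  have hnn : 0 ≤ nrm u * nrm v := mul_nonneg (nrm_nonneg u) (nrm_nonneg v)
  have := Real.sqrt_le_sqrt h2
  rw [Real.sqrt_sq_eq_abs, Real.sqrt_sq hnn] at this
  exact le_trans (le_abs_self _) this

lemma nrm_ite_le {m p : ℕ} (z : Fin m × Fin p → ℝ) (Λ : Finset (Fin m)) :
    nrm (fun ip : Fin m × Fin p => if ip.1 ∈ Λ then z ip else 0)
      ≤ ∑ i ∈ Λ, nrm (fun j => z (i, j)) := by
  have hsq : (nrm (fun ip : Fin m × Fin p => if ip.1 ∈ Λ then z ip else 0)) ^ 2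
      = ∑ i ∈ Λ, (nrm (fun j => z (i, j))) ^ 2 := by
    rw [sq_nrm, Fintype.sum_prod_type]
    have h1 : ∀ i : Fin m, ∑ j, (if (i, j).1 ∈ Λ then z (i, j) else 0) ^ 2
        = if i ∈ Λ then ∑ j, z (i, j) ^ 2 else 0 := by
      intro i
      by_cases h : i ∈ Λ <;> simp [h]
    rw [Finset.sum_congr rfl (fun i _ => h1 i), Finset.sum_ite_mem, Finset.univ_inter]
    exact Finset.sum_congr rfl (fun i _ => (sq_nrm _).symm)
  have h2 : ∑ i ∈ Λ, (nrm (fun j => z (i, j))) ^ 2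
      ≤ (∑ i ∈ Λ, nrm (fun j => z (i, j))) ^ 2 :=
    Finset.sum_sq_le_sq_sum_of_nonneg (fun i _ => nrm_nonneg _)
  nlinarith [nrm_nonneg (fun ip : Fin m × Fin p => if ip.1 ∈ Λ then z ip else 0),
    Finset.sum_nonneg (fun i (_ : i ∈ Λ) => nrm_nonneg (fun j => z (i, j)))]

lemma exists_right_deriv_sum {ιm ιp : Type*} [Fintype ιp] (Λ : Finset ιm)
    (z v : ιm → ιp → ℝ) :
    ∃ Ls, Filter.Tendsto (fun t =>
        ((∑ i ∈ Λ, nrm (fun j => z i j + t * v i j)) - ∑ i ∈ Λ, nrm (z i)) / t)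
      (nhdsWithin 0 (Set.Ioi 0)) (nhds Ls) := by
  classical
  have hb : ∀ i : ιm, ∃ Lb, Filter.Tendsto (fun t => (nrm (fun j => z i j + t * v i j) - nrm (z i)) / t)
      (nhdsWithin 0 (Set.Ioi 0)) (nhds Lb) := fun i => blockQuot (z i) (v i)
  choose Lb hLb using hb
  refine ⟨∑ i ∈ Λ, Lb i, ?_⟩
  have heq : ∀ t : ℝ, ((∑ i ∈ Λ, nrm (fun j => z i j + t * v i j)) - ∑ i ∈ Λ, nrm (z i)) / t
      = ∑ i ∈ Λ, (nrm (fun j => z i j + t * v i j) - nrm (z i)) / t := by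
    intro t
    rw [← Finset.sum_sub_distrib, Finset.sum_div]
  rw [funext heq]
  exact tendsto_finset_sum Λ (fun i _ => hLb i)

lemma blockSub_mulVec {m p n : ℕ} (D : Matrix (Fin m × Fin p) (Fin n) ℝ)
    (Λ : Finset (Fin m)) (v : Fin n → ℝ) (qq : {i // i ∈ Λ} × Fin p) :
    (blockSub D Λ).mulVec v qq = D.mulVec v ((qq.1 : Fin m), qq.2) := by
  simp [blockSub, Matrix.mulVec, Matrix.submatrix_apply, dotProduct]

lemma sum_sq_expand {ι : Type*} [Fintype ι] (r w : ι → ℝ) (t : ℝ) :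
    (1/2) * ∑ i, (r i + t * w i) ^ 2
      = (1/2) * ∑ i, (r i) ^ 2 + t * (∑ i, r i * w i) + t ^ 2 * ((1/2) * ∑ i, (w i) ^ 2) := by
  have h : ∀ i, (r i + t * w i) ^ 2
      = (r i) ^ 2 + t * (2 * (r i * w i)) + t ^ 2 * (w i) ^ 2 := fun i => by ring
  rw [Finset.sum_congr rfl (fun i _ => h i), Finset.sum_add_distrib, Finset.sum_add_distrib]
  simp only [← Finset.mul_sum]
  ring

/-- Exact penalty at d-stationary points of the generalized trimmed lasso with
least-squares loss. -/
theorem stmt9 {q n0 L : ℕ} {n m p K : Fin L → ℕ}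
    (hK : ∀ l, K l < m l)
    (γ : Fin L → ℝ) (hγ : ∀ l, 0 < γ l)
    (D : ∀ l, Matrix (Fin (m l) × Fin (p l)) (Fin (n l)) ℝ) (hD : ∀ l, D l ≠ 0)
    (c : ∀ l, Fin (m l) × Fin (p l) → ℝ)
    -- (A1): the affine system D_l x = c_l is solvable for every l
    (xbar : ∀ l, Fin (n l) → ℝ) (hA1 : ∀ l, (D l).mulVec (xbar l) = c l)
    (b : Fin q → ℝ)
    (A0 : Matrix (Fin q) (Fin n0) ℝ) (A : ∀ l, Matrix (Fin q) (Fin (n l)) ℝ)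
    (F : ((Fin n0 → ℝ) × (∀ l, Fin (n l) → ℝ)) → ℝ)
    (hF : ∀ x, F x =
      (1 / 2) * ∑ i, (b i - (A0.mulVec x.1 i + ∑ l, (A l).mulVec (x.2 l) i)) ^ 2 +
        ∑ l, γ l * trimmedL1 (K l) (fun ip => (D l).mulVec (x.2 l) ip - c l ip))
    (xstar : (Fin n0 → ℝ) × (∀ l, Fin (n l) → ℝ))
    -- x* is a d-stationary point of F
    (hstat : ∀ d, ∀ Ld : ℝ, HasDDerivAt F xstar d Ld → 0 ≤ Ld)
    -- thresholds
    (hthr : ∀ l, γ l >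
      specNorm (A l) * l2 (fun i => b i - ∑ l', (A l').mulVec (xbar l') i) /
        sigmaK (K l) (D l)) :
    ∀ l, trimmedL1 (K l) (fun ip => (D l).mulVec (xstar.2 l) ip - c l ip) = 0 := by
  classical
  intro l0
  by_contra hT0
  set rstar : Fin q → ℝ :=
    fun i => b i - (A0.mulVec xstar.1 i + ∑ l, (A l).mulVec (xstar.2 l) i) with hrstar_def
  set rbar : Fin q → ℝ := fun i => b i - ∑ l, (A l).mulVec (xbar l) i with hrbar_def
  have hTnn : ∀ l, 0 ≤ trimmedL1 (K l) (fun ip => (D l).mulVec (xstar.2 l) ip - c l ip) :=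
    fun l => trimmedL1_nonneg _ _
  -- ═══════════ STEP 1 : ‖r*‖ ≤ ‖r̄‖ ═══════════
  set d1 : (Fin n0 → ℝ) × (∀ l, Fin (n l) → ℝ) :=
    (-xstar.1, fun l => xbar l - xstar.2 l) with hd1_def
  have hres1 : ∀ t : ℝ, ∀ i, b i - (A0.mulVec ((xstar + t • d1).1) i
      + ∑ l, (A l).mulVec ((xstar + t • d1).2 l) i)
      = rstar i + t * (rbar i - rstar i) := by
    intro t i
    have h1 : (xstar + t • d1).1 = xstar.1 + t • (-xstar.1) := rfl
    have h3 : ∑ l, (A l).mulVec ((xstar + t • d1).2 l) i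
        = ∑ l, (A l).mulVec (xstar.2 l + t • (xbar l - xstar.2 l)) i :=
      Finset.sum_congr rfl (fun l _ => rfl)
    rw [h1, h3]
    simp only [Matrix.mulVec_add, Matrix.mulVec_smul, Matrix.mulVec_neg, Matrix.mulVec_sub,
      Pi.add_apply, Pi.smul_apply, Pi.neg_apply, Pi.sub_apply, smul_eq_mul,
      Finset.sum_add_distrib, Finset.sum_sub_distrib, ← Finset.mul_sum]
    simp only [hrstar_def, hrbar_def]
    ring
  have hpen1 : ∀ t : ℝ, 0 ≤ 1 - t → ∀ l,
      trimmedL1 (K l) (fun ip => (D l).mulVec ((xstar + t • d1).2 l) ip - c l ip)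
        = (1 - t) * trimmedL1 (K l) (fun ip => (D l).mulVec (xstar.2 l) ip - c l ip) := by
    intro t ht l
    have harg : (fun ip => (D l).mulVec ((xstar + t • d1).2 l) ip - c l ip)
        = fun ip => (1 - t) * ((D l).mulVec (xstar.2 l) ip - c l ip) := by
      funext ip
      have h2 : (xstar + t • d1).2 l = xstar.2 l + t • (xbar l - xstar.2 l) := rfl
      rw [h2]
      have hc1 : (D l).mulVec (xbar l) ip = c l ip := congrFun (hA1 l) ip
      simp only [Matrix.mulVec_add, Matrix.mulVec_smul, Matrix.mulVec_sub, Pi.add_apply,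
        Pi.smul_apply, Pi.sub_apply, smul_eq_mul]
      rw [hc1]
      ring
    rw [harg, trimmedL1_scale _ _ ht]
  set SD : ℝ := ∑ i, rstar i * (rbar i - rstar i) with hSD_def
  set ST : ℝ := ∑ l, γ l * trimmedL1 (K l)
    (fun ip => (D l).mulVec (xstar.2 l) ip - c l ip) with hST_def
  set CD : ℝ := (1/2) * ∑ i, (rbar i - rstar i) ^ 2 with hCD_def
  have hFd1 : ∀ t ∈ Set.Ioo (0:ℝ) 1, F (xstar + t • d1) - F xstar
      = t * (SD - ST) + t ^ 2 * CD := by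
    intro t ht
    rw [hF (xstar + t • d1), hF xstar]
    have hloss : ∑ i, (b i - (A0.mulVec ((xstar + t • d1).1) i
        + ∑ l, (A l).mulVec ((xstar + t • d1).2 l) i)) ^ 2
        = ∑ i, (rstar i + t * (rbar i - rstar i)) ^ 2 :=
      Finset.sum_congr rfl (fun i _ => by rw [hres1 t i])
    have hpen : ∑ l, γ l * trimmedL1 (K l)
        (fun ip => (D l).mulVec ((xstar + t • d1).2 l) ip - c l ip)
        = ∑ l, (γ l * trimmedL1 (K l) (fun ip => (D l).mulVec (xstar.2 l) ip - c l ip)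
            - t * (γ l * trimmedL1 (K l) (fun ip => (D l).mulVec (xstar.2 l) ip - c l ip))) := by
      refine Finset.sum_congr rfl (fun l _ => ?_)
      rw [hpen1 t (by linarith [ht.2]) l]
      ring
    rw [hloss, hpen, Finset.sum_sub_distrib, ← Finset.mul_sum, sum_sq_expand, ← hST_def]
    have hfold : ∑ i, (b i - (A0.mulVec xstar.1 i + ∑ l, (A l).mulVec (xstar.2 l) i)) ^ 2
        = ∑ i, rstar i ^ 2 :=
      Finset.sum_congr rfl (fun i _ => by rw [hrstar_def])
    rw [hfold]
    rw [← hSD_def, ← hCD_def]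
    ring
  have hpoly1 : Filter.Tendsto (fun t : ℝ => (SD - ST) + t * CD)
      (nhdsWithin 0 (Set.Ioi 0)) (nhds (SD - ST)) := by
    have hcont : Continuous (fun t : ℝ => (SD - ST) + t * CD) :=
      continuous_const.add (continuous_id.mul continuous_const)
    have h := hcont.tendsto 0
    simp only [zero_mul, add_zero] at h
    exact h.mono_left nhdsWithin_le_nhds
  have hdd1 : HasDDerivAt F xstar d1 (SD - ST) := by
    show Filter.Tendsto (fun ς : ℝ => (F (xstar + ς • d1) - F xstar) / ς)
      (nhdsWithin 0 (Set.Ioi 0)) (nhds (SD - ST))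
    refine Filter.Tendsto.congr' ?_ hpoly1
    filter_upwards [Ioo_mem_nhdsGT_of_mem
      (Set.mem_Ico.mpr ⟨le_refl (0:ℝ), zero_lt_one⟩)] with t ht
    have htne : t ≠ 0 := ne_of_gt ht.1
    rw [hFd1 t ht]
    field_simp
  have h01 : 0 ≤ SD - ST := hstat d1 _ hdd1
  have hSTnn : 0 ≤ ST := by
    rw [hST_def]
    exact Finset.sum_nonneg (fun l _ => mul_nonneg (hγ l).le (hTnn l))
  have hrle : nrm rstar ≤ nrm rbar := by
    have hb1 : ∑ i, rstar i ^ 2 ≤ ∑ i, rstar i * rbar i := by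
      have : SD = (∑ i, rstar i * rbar i) - ∑ i, rstar i ^ 2 := by
        rw [hSD_def, ← Finset.sum_sub_distrib]
        exact Finset.sum_congr rfl (fun i _ => by ring)
      linarith [this ▸ h01]
    have hb2 : ∑ i, rstar i * rbar i ≤ nrm rstar * nrm rbar := dot_le_nrm rstar rbar
    have hb3 : nrm rstar ^ 2 ≤ nrm rstar * nrm rbar := by
      rw [sq_nrm]; linarith
    rcases eq_or_lt_of_le (nrm_nonneg rstar) with h | h
    · rw [← h]; exact nrm_nonneg rbar
    · nlinarith
  -- ═══════════ STEP 2 : a good descent vector u ═══════════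
  have hTpos : 0 < trimmedL1 (K l0) (fun ip => (D l0).mulVec (xstar.2 l0) ip - c l0 ip) :=
    lt_of_le_of_ne (hTnn l0) (Ne.symm hT0)
  set z : Fin (m l0) × Fin (p l0) → ℝ :=
    fun ip => (D l0).mulVec (xstar.2 l0) ip - c l0 ip with hz_def
  obtain ⟨Λ, hΛmem, hΛinf⟩ := Finset.exists_mem_eq_inf'
    (PP_nonempty (m := m l0) (K l0)) (fun Λ => ∑ i ∈ Λ, nrm (fun j => z (i, j)))
  have hcard : Λ.card = m l0 - K l0 := by
    simpa [PP, Finset.mem_powersetCard_univ] using hΛmem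
  have hTeq : trimmedL1 (K l0) z = ∑ i ∈ Λ, nrm (fun j => z (i, j)) := by
    rw [trimmedL1_eq]; exact hΛinf
  set w : Fin (n l0) → ℝ := xstar.2 l0 - xbar l0 with hw_def
  have hzw : ∀ ip, (D l0).mulVec w ip = z ip := by
    intro ip
    rw [hw_def, Matrix.mulVec_sub, Pi.sub_apply, congrFun (hA1 l0) ip]
  have hkey : ∃ u : Fin (n l0) → ℝ,
      (∀ i ∈ Λ, ∀ j, (D l0).mulVec u (i, j) = z (i, j)) ∧
      sigmaK (K l0) (D l0) * nrm u ≤ ∑ i ∈ Λ, nrm (fun j => z (i, j)) ∧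
      0 < sigmaK (K l0) (D l0) := by
    by_cases hsurj : Function.Surjective (D l0).mulVec
    · have hσeq : sigmaK (K l0) (D l0) = sigmaMin (D l0) := by
        simp [sigmaK, hsurj]
      obtain ⟨w', hw'⟩ := hsurj (fun ip => if ip.1 ∈ Λ then z ip else 0)
      obtain ⟨hpos, hsol⟩ := sigmaMin_spec (D l0) (hD l0)
      obtain ⟨u, huw, hub⟩ := hsol w'
      refine ⟨u, ?_, ?_, hσeq ▸ hpos⟩
      · intro i hi j
        have h5 := congrFun (huw.trans hw') (i, j)
        simpa [hi] using h5
      · rw [hσeq]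
        calc sigmaMin (D l0) * nrm u ≤ nrm ((D l0).mulVec w') := hub
        _ = nrm (fun ip : Fin (m l0) × Fin (p l0) => if ip.1 ∈ Λ then z ip else 0) := by
            rw [hw']
        _ ≤ ∑ i ∈ Λ, nrm (fun j => z (i, j)) := nrm_ite_le z Λ
    · set B := blockSub (D l0) Λ with hB_def
      have hBw : ∀ qq, B.mulVec w qq = z ((qq.1 : Fin (m l0)), qq.2) := fun qq => by
        rw [hB_def, blockSub_mulVec]; exact hzw _
      have hBne : B ≠ 0 := by
        intro hB0
        have hz0 : ∀ i ∈ Λ, nrm (fun j => z (i, j)) = 0 := by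
          intro i hi
          have hzz : ∀ j, z (i, j) = 0 := by
            intro j
            have h6 := hBw (⟨i, hi⟩, j)
            rw [hB0] at h6
            simpa using h6.symm
          rw [nrm]
          simp [hzz]
        rw [hTeq, Finset.sum_eq_zero hz0] at hTpos
        exact lt_irrefl 0 hTpos
      obtain ⟨hpos, hsol⟩ := sigmaMin_spec B hBne
      obtain ⟨u, huw, hub⟩ := hsol w
      set SS : Set ℝ := {s : ℝ | ∃ Λ' : Finset (Fin (m l0)), Λ'.card = m l0 - K l0 ∧
          blockSub (D l0) Λ' ≠ 0 ∧ s = sigmaMin (blockSub (D l0) Λ')} with hSS_def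
      have hmemS : sigmaMin B ∈ SS := ⟨Λ, hcard, hB_def ▸ hBne, by rw [hB_def]⟩
      have hfin : SS.Finite := by
        apply Set.Finite.subset (Set.finite_range
          (fun Λ' : Finset (Fin (m l0)) => sigmaMin (blockSub (D l0) Λ')))
        rintro s ⟨Λ', _, _, rfl⟩
        exact ⟨Λ', rfl⟩
      have hσeq : sigmaK (K l0) (D l0) = sInf SS := by
        simp [sigmaK, hsurj, hSS_def]
      have hle : sigmaK (K l0) (D l0) ≤ sigmaMin B := by
        rw [hσeq]; exact csInf_le hfin.bddBelow hmemS
      have hσpos : 0 < sigmaK (K l0) (D l0) := by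
        rw [hσeq]
        have hmem2 := Set.Nonempty.csInf_mem ⟨_, hmemS⟩ hfin
        obtain ⟨Λ', _, hne', heq'⟩ := hmem2
        rw [heq']
        exact (sigmaMin_spec _ hne').1
      refine ⟨u, ?_, ?_, hσpos⟩
      · intro i hi j
        have h1 := congrFun huw (⟨i, hi⟩, j)
        rw [hBw] at h1
        rw [hB_def, blockSub_mulVec] at h1
        exact h1
      · calc sigmaK (K l0) (D l0) * nrm u ≤ sigmaMin B * nrm u :=
            mul_le_mul_of_nonneg_right hle (nrm_nonneg u)
        _ ≤ nrm (B.mulVec w) := hub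
        _ = nrm (fun qq : {i // i ∈ Λ} × Fin (p l0) => z ((qq.1 : Fin (m l0)), qq.2)) :=
            congrArg nrm (funext hBw)
        _ ≤ ∑ i ∈ Λ, nrm (fun j => z (i, j)) := nrm_restrict_le z Λ
  obtain ⟨u, hu1, hu2, hσpos⟩ := hkey
  -- ═══════════ STEP 3 : descent direction ═══════════
  set v : Fin (m l0) × Fin (p l0) → ℝ := fun ip => -((D l0).mulVec u ip) with hv_def
  set wA : Fin q → ℝ := (A l0).mulVec u with hwA_def
  set d2 : (Fin n0 → ℝ) × (∀ l, Fin (n l) → ℝ) :=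
    ((0 : Fin n0 → ℝ), Function.update (fun l => (0 : Fin (n l) → ℝ)) l0 (-u)) with hd2_def
  have hp1 : ∀ t : ℝ, (xstar + t • d2).1 = xstar.1 := by
    intro t
    show xstar.1 + t • (0 : Fin n0 → ℝ) = xstar.1
    rw [smul_zero, add_zero]
  have hp2 : ∀ t : ℝ, ∀ l, l ≠ l0 → (xstar + t • d2).2 l = xstar.2 l := by
    intro t l hl
    show xstar.2 l + t • (Function.update (fun l => (0 : Fin (n l) → ℝ)) l0 (-u) l) = xstar.2 l
    rw [Function.update_of_ne hl, smul_zero, add_zero]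
  have hp3 : ∀ t : ℝ, (xstar + t • d2).2 l0 = xstar.2 l0 + t • (-u) := by
    intro t
    show xstar.2 l0 + t • (Function.update (fun l => (0 : Fin (n l) → ℝ)) l0 (-u) l0) = _
    rw [Function.update_self]
  have hres2 : ∀ t : ℝ, ∀ i, b i - (A0.mulVec ((xstar + t • d2).1) i
      + ∑ l, (A l).mulVec ((xstar + t • d2).2 l) i)
      = rstar i + t * wA i := by
    intro t i
    have hterm : ∀ l, (A l).mulVec ((xstar + t • d2).2 l) i
        = (A l).mulVec (xstar.2 l) i + t * (if l = l0 then -(wA i) else 0) := by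
      intro l
      by_cases hl : l = l0
      · subst hl
        rw [hp3 t, if_pos rfl]
        simp only [Matrix.mulVec_add, Matrix.mulVec_smul, Matrix.mulVec_neg, Pi.add_apply,
          Pi.smul_apply, Pi.neg_apply, smul_eq_mul, hwA_def]
      · rw [hp2 t l hl, if_neg hl, mul_zero, add_zero]
    rw [hp1 t, Finset.sum_congr rfl (fun l _ => hterm l)]
    rw [Finset.sum_add_distrib, ← Finset.mul_sum, Finset.sum_ite_eq' Finset.univ l0
      (fun _ => -(wA i)), if_pos (Finset.mem_univ l0)]
    simp only [hrstar_def]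
    ring
  set h : ℝ → ℝ := fun t => trimmedL1 (K l0) (fun ip => z ip + t * v ip) with hh_def
  have hh0 : h 0 = trimmedL1 (K l0) z := by
    rw [hh_def]
    simp only [zero_mul, add_zero]
  have hpertl0 : ∀ t : ℝ, (fun ip => (D l0).mulVec ((xstar + t • d2).2 l0) ip - c l0 ip)
      = (fun ip => z ip + t * v ip) := by
    intro t
    funext ip
    rw [hp3 t]
    simp only [Matrix.mulVec_add, Matrix.mulVec_smul, Matrix.mulVec_neg, Pi.add_apply,
      Pi.smul_apply, Pi.neg_apply, smul_eq_mul, hz_def, hv_def]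
    ring
  have hpen2 : ∀ t : ℝ, ∑ l, γ l * trimmedL1 (K l)
      (fun ip => (D l).mulVec ((xstar + t • d2).2 l) ip - c l ip)
      = ∑ l, (γ l * trimmedL1 (K l) (fun ip => (D l).mulVec (xstar.2 l) ip - c l ip)
          + if l = l0 then γ l0 * (h t - h 0) else 0) := by
    intro t
    refine Finset.sum_congr rfl (fun l _ => ?_)
    by_cases hl : l = l0
    · rw [hl, if_pos rfl, hpertl0 t]
      have h7 : trimmedL1 (K l0) (fun ip => z ip + t * v ip) = h t := by rw [hh_def]
      rw [h7, hh0, hz_def]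
      ring
    · have harg : (fun ip => (D l).mulVec ((xstar + t • d2).2 l) ip - c l ip)
          = (fun ip => (D l).mulVec (xstar.2 l) ip - c l ip) := by
        funext ip
        rw [hp2 t l hl]
      rw [harg, if_neg hl, add_zero]
  set SW : ℝ := ∑ i, rstar i * wA i with hSW_def
  set CW : ℝ := (1/2) * ∑ i, (wA i) ^ 2 with hCW_def
  have hFd2 : ∀ t : ℝ, F (xstar + t • d2) - F xstar
      = t * SW + t ^ 2 * CW + γ l0 * (h t - h 0) := by
    intro t
    rw [hF (xstar + t • d2), hF xstar]
    have hloss : ∑ i, (b i - (A0.mulVec ((xstar + t • d2).1) i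
        + ∑ l, (A l).mulVec ((xstar + t • d2).2 l) i)) ^ 2
        = ∑ i, (rstar i + t * wA i) ^ 2 :=
      Finset.sum_congr rfl (fun i _ => by rw [hres2 t i])
    rw [hloss, hpen2 t, Finset.sum_add_distrib, Finset.sum_ite_eq' Finset.univ l0
      (fun _ => γ l0 * (h t - h 0)), if_pos (Finset.mem_univ l0), sum_sq_expand, ← hST_def]
    have hfold : ∑ i, (b i - (A0.mulVec xstar.1 i + ∑ l, (A l).mulVec (xstar.2 l) i)) ^ 2
        = ∑ i, rstar i ^ 2 :=
      Finset.sum_congr rfl (fun i _ => by rw [hrstar_def])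
    rw [hfold]
    rw [← hSW_def, ← hCW_def]
    ring
  -- right derivative of h
  set f : Finset (Fin (m l0)) → ℝ → ℝ :=
    fun Λ' t => ∑ i ∈ Λ', nrm (fun j => z (i, j) + t * v (i, j)) with hf_def
  have hf0 : ∀ Λ', f Λ' 0 = ∑ i ∈ Λ', nrm (fun j => z (i, j)) := by
    intro Λ'
    rw [hf_def]
    simp only [zero_mul, add_zero]
  have hfc : ∀ Λ' ∈ PP (m l0) (K l0), Filter.Tendsto (f Λ')
      (nhdsWithin 0 (Set.Ioi 0)) (nhds (f Λ' 0)) := by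
    intro Λ' _
    have hcont : Continuous (f Λ') := by
      rw [hf_def]
      apply continuous_finset_sum
      intro i _
      show Continuous fun t : ℝ => Real.sqrt (∑ j, (z (i, j) + t * v (i, j)) ^ 2)
      apply Real.continuous_sqrt.comp
      apply continuous_finset_sum
      intro j _
      exact (continuous_const.add (continuous_id.mul continuous_const)).pow 2
    exact (hcont.tendsto 0).mono_left nhdsWithin_le_nhds
  have hfd : ∀ Λ' : Finset (Fin (m l0)), ∃ Li, (Λ' ∈ PP (m l0) (K l0) →
      Filter.Tendsto (fun t => (f Λ' t - f Λ' 0) / t)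
        (nhdsWithin 0 (Set.Ioi 0)) (nhds Li)) := by
    intro Λ'
    obtain ⟨Ls, hLs⟩ := exists_right_deriv_sum Λ'
      (fun i j => z (i, j)) (fun i j => v (i, j))
    refine ⟨Ls, fun _ => ?_⟩
    have heq : f Λ' 0 = ∑ i ∈ Λ', nrm (fun j => z (i, j)) := hf0 Λ'
    rw [heq]
    exact hLs
  obtain ⟨Lh, hLh⟩ := exists_right_deriv_inf' (PP (m l0) (K l0))
    (PP_nonempty _) f hfc hfd
  have hrep : ∀ t : ℝ, h t = (PP (m l0) (K l0)).inf' (PP_nonempty _) (fun Λ' => f Λ' t) :=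
    fun t => trimmedL1_eq _ _
  have hquot : Filter.Tendsto (fun t => (h t - h 0) / t)
      (nhdsWithin 0 (Set.Ioi 0)) (nhds Lh) := by
    have heq : (fun t => (h t - h 0) / t)
        = fun t => ((PP (m l0) (K l0)).inf' (PP_nonempty _) (fun Λ' => f Λ' t)
            - (PP (m l0) (K l0)).inf' (PP_nonempty _) (fun Λ' => f Λ' 0)) / t := by
      funext t
      rw [hrep t, hrep 0]
    rw [heq]
    exact hLh
  have hpoly2 : Filter.Tendsto (fun t : ℝ => (SW + t * CW) + γ l0 * ((h t - h 0) / t))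
      (nhdsWithin 0 (Set.Ioi 0)) (nhds (SW + γ l0 * Lh)) := by
    have h1 : Filter.Tendsto (fun t : ℝ => SW + t * CW)
        (nhdsWithin 0 (Set.Ioi 0)) (nhds SW) := by
      have hcont : Continuous (fun t : ℝ => SW + t * CW) :=
        continuous_const.add (continuous_id.mul continuous_const)
      have h := hcont.tendsto 0
      simp only [zero_mul, add_zero] at h
      exact h.mono_left nhdsWithin_le_nhds
    exact h1.add (hquot.const_mul (γ l0))
  have hdd2 : HasDDerivAt F xstar d2 (SW + γ l0 * Lh) := by
    show Filter.Tendsto (fun ς : ℝ => (F (xstar + ς • d2) - F xstar) / ς)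
      (nhdsWithin 0 (Set.Ioi 0)) (nhds (SW + γ l0 * Lh))
    refine Filter.Tendsto.congr' ?_ hpoly2
    filter_upwards [self_mem_nhdsWithin] with t ht
    have ht0 : (0:ℝ) < t := ht
    have htne : t ≠ 0 := ne_of_gt ht0
    rw [hFd2 t]
    field_simp
  have h02 : 0 ≤ SW + γ l0 * Lh := hstat d2 _ hdd2
  -- Lh ≤ -T0
  set T0 : ℝ := trimmedL1 (K l0) z with hT0_def
  have hub : ∀ᶠ t in nhdsWithin (0:ℝ) (Set.Ioi 0), (h t - h 0) / t ≤ -T0 := by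
    filter_upwards [Ioo_mem_nhdsGT_of_mem
      (Set.mem_Ico.mpr ⟨le_refl (0:ℝ), zero_lt_one⟩)] with t ht
    have hle1 : h t ≤ (1 - t) * T0 := by
      rw [hrep t]
      calc (PP (m l0) (K l0)).inf' (PP_nonempty _) (fun Λ' => f Λ' t) ≤ f Λ t :=
          Finset.inf'_le _ hΛmem
      _ = (1 - t) * T0 := by
          show (∑ i ∈ Λ, nrm (fun j => z (i, j) + t * v (i, j))) = (1 - t) * T0
          have hterm : ∀ i ∈ Λ, nrm (fun j => z (i, j) + t * v (i, j))
              = (1 - t) * nrm (fun j => z (i, j)) := by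
            intro i hi
            have harg : (fun j => z (i, j) + t * v (i, j))
                = fun j => (1 - t) * z (i, j) := by
              funext j
              rw [hv_def]
              simp only
              rw [hu1 i hi j]
              ring
            rw [harg, nrm_const_mul _ (by linarith [ht.2] : (0:ℝ) ≤ 1 - t)]
          rw [Finset.sum_congr rfl hterm, ← Finset.mul_sum]
          exact congrArg (fun x => (1 - t) * x) hTeq.symm
    have hh0' : h 0 = T0 := hh0
    rw [div_le_iff₀ ht.1, hh0']
    nlinarith [hle1]
  have hLhle : Lh ≤ -T0 := le_of_tendsto hquot hub
  -- ═══════════ final contradiction ═══════════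
  have hγT : γ l0 * T0 ≤ SW := by
    have := mul_le_mul_of_nonneg_left hLhle (hγ l0).le
    linarith
  have hSWle : SW ≤ nrm rbar * (specNorm (A l0) * nrm u) := by
    have h1 : SW ≤ nrm rstar * nrm wA := by
      rw [hSW_def]
      exact dot_le_nrm rstar wA
    have h2 : nrm rstar * nrm wA ≤ nrm rbar * nrm wA :=
      mul_le_mul_of_nonneg_right hrle (nrm_nonneg wA)
    have h3 : nrm wA ≤ specNorm (A l0) * nrm u := by
      rw [hwA_def]
      exact specNorm_spec (A l0) u
    have h4 : nrm rbar * nrm wA ≤ nrm rbar * (specNorm (A l0) * nrm u) :=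
      mul_le_mul_of_nonneg_left h3 (nrm_nonneg rbar)
    linarith
  have hu2' : sigmaK (K l0) (D l0) * nrm u ≤ T0 := hu2.trans_eq hTeq.symm
  have hTpos' : 0 < T0 := hTpos
  have hthr' : specNorm (A l0) * nrm rbar < γ l0 * sigmaK (K l0) (D l0) := by
    have hl2 : l2 rbar = nrm rbar := rfl
    have h5 := hthr l0
    rw [hl2] at h5
    exact (div_lt_iff₀ hσpos).mp h5
  by_cases hnu : nrm u = 0
  · rw [hnu, mul_zero, mul_zero] at hSWle
    nlinarith [hγ l0, hTpos']
  · have hnupos : 0 < nrm u := lt_of_le_of_ne (nrm_nonneg u) (Ne.symm hnu)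
    have hspec_nn : 0 ≤ specNorm (A l0) := by
      have h3 : 0 ≤ specNorm (A l0) * nrm u :=
        le_trans (nrm_nonneg wA) (by rw [hwA_def]; exact specNorm_spec (A l0) u)
      nlinarith
    have hrbnn : 0 ≤ nrm rbar := nrm_nonneg rbar
    nlinarith [mul_le_mul_of_nonneg_right hSWle hσpos.le,
      mul_le_mul_of_nonneg_left hu2' (mul_nonneg hrbnn hspec_nn),
      mul_lt_mul_of_pos_right hthr' hTpos', hγT, hσpos, hTpos']
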